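/- arXiv:1303.5838 — 4 statements merged into one kernel-verified Lean document; each statement's English description precedes it below -/
import Mathlib

section
/- For all ε > 0, any real random variable X and random vector Y (on the same probability space), one has P(E(X²|Y) ≤ ε²) ≤ (4/3) P(|X| ≤ 2ε). -/
/-!
On `A = {E(X² | m) ≤ ε²}`, which is `m`-measurable, the defining property of conditional
expectation gives `∫_A X² ≤ ε² μ(A)`, so by Markov's inequality at most a quarter of `A` lies in
`{X² ≥ 4ε²}`. The remaining three quarters lie in `{|X| ≤ 2ε}`.
-/

open MeasureTheory

section ConditionalChebyshev

variable {Ω : Type*} {m mΩ : MeasurableSpace Ω} {μ : Measure Ω} [IsFiniteMeasure μ] {f : Ω → ℝ}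

theorem setIntegral_le_mul_measureReal_of_condExp_le (hm : m ≤ mΩ) (hf : Integrable f μ)
    {s : Set Ω} (hs : MeasurableSet[m] s) {c : ℝ} (hc : ∀ ω ∈ s, μ[f | m] ω ≤ c) :
    ∫ ω in s, f ω ∂μ ≤ c * μ.real s :=
  calc ∫ ω in s, f ω ∂μ = ∫ ω in s, μ[f | m] ω ∂μ := (setIntegral_condExp hm hf hs).symm
    _ ≤ ∫ _ in s, c ∂μ :=
      setIntegral_mono_on integrable_condExp.integrableOn integrableOn_const (hm s hs) hc
    _ = c * μ.real s := by rw [setIntegral_const, smul_eq_mul, mul_comm]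

theorem mul_measureReal_inter_le_of_condExp_le (hm : m ≤ mΩ) (hf : Integrable f μ)
    (hf_nonneg : 0 ≤ f) (c t : ℝ) :
    t * μ.real ({ω | t ≤ f ω} ∩ {ω | μ[f | m] ω ≤ c}) ≤ c * μ.real {ω | μ[f | m] ω ≤ c} := by
  have hA : MeasurableSet[m] {ω | μ[f | m] ω ≤ c} :=
    measurableSet_le stronglyMeasurable_condExp.measurable measurable_const
  calc t * μ.real ({ω | t ≤ f ω} ∩ {ω | μ[f | m] ω ≤ c})
      = t * (μ.restrict {ω | μ[f | m] ω ≤ c}).real {ω | t ≤ f ω} := by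
        rw [measureReal_restrict_apply' (hm _ hA)]
    _ ≤ ∫ ω in {ω | μ[f | m] ω ≤ c}, f ω ∂μ :=
        mul_meas_ge_le_integral_of_nonneg (Filter.Eventually.of_forall hf_nonneg) hf.restrict t
    _ ≤ c * μ.real {ω | μ[f | m] ω ≤ c} :=
        setIntegral_le_mul_measureReal_of_condExp_le hm hf hA fun _ h => h

theorem measure_condExp_sq_le_le_four_thirds_mul (hm : m ≤ mΩ) {X : Ω → ℝ}
    (hint : Integrable (fun ω => X ω ^ 2) μ) {ε : ℝ} (hε : 0 < ε) :
    μ {ω | μ[fun ω' => X ω' ^ 2 | m] ω ≤ ε ^ 2} ≤ 4 / 3 * μ {ω | |X ω| ≤ 2 * ε} := by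
  set A := {ω | μ[fun ω' => X ω' ^ 2 | m] ω ≤ ε ^ 2}
  set S := {ω | |X ω| ≤ 2 * ε}
  have hsplit : μ.real A ≤ μ.real (A \ S) + μ.real S :=
    (measureReal_mono (Set.subset_sdiff_union A S)).trans (measureReal_union_le _ _)
  have hdiff : μ.real (A \ S) ≤ μ.real ({ω | (2 * ε) ^ 2 ≤ X ω ^ 2} ∩ A) := by
    refine measureReal_mono fun ω ⟨hωA, hωS⟩ => ⟨?_, hωA⟩
    change (2 * ε) ^ 2 ≤ X ω ^ 2
    rw [← sq_abs (X ω)]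
    exact pow_le_pow_left₀ (by positivity) (not_le.1 hωS).le 2
  have hmarkov := mul_measureReal_inter_le_of_condExp_le hm hint (fun ω => sq_nonneg (X ω))
    (ε ^ 2) ((2 * ε) ^ 2)
  have hreal : μ.real A ≤ 4 / 3 * μ.real S := by
    nlinarith [pow_pos hε 2]
  rw [← ENNReal.toReal_le_toReal (measure_ne_top μ A) (by finiteness), ENNReal.toReal_mul,
    ENNReal.toReal_div]
  norm_num
  exact hreal

end ConditionalChebyshev

theorem stmt0_general {Ω F : Type*} [MeasurableSpace F] {mΩ : MeasurableSpace Ω}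
    (μ : Measure Ω) [IsProbabilityMeasure μ]
    (X : Ω → ℝ) (Y : Ω → F)
    (hY : Measurable Y)
    (hint : Integrable (fun ω => (X ω) ^ 2) μ)
    (ε : ℝ) (hε : 0 < ε) :
    μ {ω | (μ[fun ω' => (X ω') ^ 2 | MeasurableSpace.comap Y ‹MeasurableSpace F›]) ω ≤ ε ^ 2}
      ≤ (4 / 3) * μ {ω | |X ω| ≤ 2 * ε} :=
  measure_condExp_sq_le_le_four_thirds_mul hY.comap_le hint hε

/-- For all ε > 0, any real random variable X and random vector Y on the same
probability space, P(E(X²|Y) ≤ ε²) ≤ (4/3) P(|X| ≤ 2ε). -/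
theorem stmt0 {Ω F : Type*} [MeasurableSpace F] {mΩ : MeasurableSpace Ω}
    (μ : Measure Ω) [IsProbabilityMeasure μ]
    (X : Ω → ℝ) (Y : Ω → F)
    (hX : Measurable X) (hY : Measurable Y)
    (hint : Integrable (fun ω => (X ω) ^ 2) μ)
    (ε : ℝ) (hε : 0 < ε) :
    μ {ω | (μ[fun ω' => (X ω') ^ 2 | MeasurableSpace.comap Y ‹MeasurableSpace F›]) ω ≤ ε ^ 2}
      ≤ (4 / 3) * μ {ω | |X ω| ≤ 2 * ε} :=
  stmt0_general (mΩ := mΩ) μ X Y hY hint ε hε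
end

section
/- For any n×n complex matrices C and C' with ordered singular values sᵢ and sᵢ', one has ∑ᵢ₌₁ⁿ |sᵢ − sᵢ'|² ≤ ‖C − C'‖_HS² (Hoffman–Wielandt inequality for singular values). -/
/-- The singular values of a rectangular complex matrix, in nonincreasing order:
the square roots of the eigenvalues of C * Cᴴ, sorted nonincreasingly. -/
noncomputable def svals {k n : ℕ} (C : Matrix (Fin k) (Fin n) ℂ) : Fin k → ℝ :=
  fun i =>
    Real.sqrt ((Matrix.isHermitian_mul_conjTranspose_self C).eigenvalues
      (Tuple.sort (Matrix.isHermitian_mul_conjTranspose_self C).eigenvalues i.rev))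

/-!
Since `∑ sᵢ² = tr (C Cᴴ) = ‖C‖²_HS`, expanding both squares reduces the inequality to von
Neumann's trace inequality `Re tr (C C'ᴴ) ≤ ∑ sᵢ s'ᵢ`. With singular value decompositions
`C = U Σ V`, `C' = U' Σ' V'`, the trace is `∑ₖₗ sₖ s'ₗ Yₖₗ Zₗₖ` for the unitary matrices
`Y = V V'ᴴ` and `Z = U'ᴴ U`. Each `|Yₖₗ Zₗₖ|` is at most `(|Yₖₗ|² + |Zₗₖ|²) / 2`, an entry of a
doubly stochastic matrix; by Birkhoff's theorem the resulting sum is a convex combination of the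
sums `∑ₖ sₖ s'_{π k}`, each bounded by `∑ₖ sₖ s'ₖ` by the rearrangement inequality.
-/

open Finset Matrix

section

variable {ι : Type*} [Fintype ι] [DecidableEq ι] {𝕜 : Type*} [RCLike 𝕜]

theorem Monovary.sum_sum_mul_mul_le_of_mem_doublyStochastic {a b : ι → ℝ} (hab : Monovary a b)
    {D : Matrix ι ι ℝ} (hD : D ∈ doublyStochastic ℝ ι) :
    ∑ i, ∑ j, a i * b j * D i j ≤ ∑ i, a i * b i := by
  have hconv : Convex ℝ {D : Matrix ι ι ℝ | ∑ i, ∑ j, a i * b j * D i j ≤ ∑ i, a i * b i} := by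
    refine convex_halfSpace_le ⟨fun D E => ?_, fun c D => ?_⟩ _
    · simp only [Matrix.add_apply, mul_add, sum_add_distrib]
    · simp only [Matrix.smul_apply, smul_eq_mul, mul_sum]
      exact sum_congr rfl fun i _ => sum_congr rfl fun j _ => by ring
  have hD' : D ∈ convexHull ℝ {σ.permMatrix ℝ | σ : Equiv.Perm ι} := by
    rwa [← doublyStochastic_eq_convexHull_permMatrix]
  refine convexHull_min ?_ hconv hD'
  rintro _ ⟨σ, rfl⟩
  simpa [Equiv.Perm.permMatrix, PEquiv.toMatrix_apply] using hab.sum_mul_comp_perm_le_sum_mul (σ := σ)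

lemma Matrix.mul_conjTranspose_self_apply_self {m n : Type*} [Fintype n] (A : Matrix m n 𝕜)
    (i : m) : (A * Aᴴ) i i = ((∑ j, ‖A i j‖ ^ 2 : ℝ) : 𝕜) := by
  simp [mul_apply, RCLike.mul_conj]

lemma Matrix.conjTranspose_mul_self_apply_self {m n : Type*} [Fintype m] (A : Matrix m n 𝕜)
    (j : n) : (Aᴴ * A) j j = ((∑ i, ‖A i j‖ ^ 2 : ℝ) : 𝕜) := by
  simp [mul_apply, RCLike.conj_mul]

lemma Matrix.re_trace_mul_conjTranspose_self {m n : Type*} [Fintype m] [Fintype n]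
    (A : Matrix m n 𝕜) : RCLike.re (A * Aᴴ).trace = ∑ i, ∑ j, ‖A i j‖ ^ 2 := by
  simp [trace, mul_conjTranspose_self_apply_self]

lemma Matrix.re_trace_sub_mul_conjTranspose_sub {m n : Type*} [Fintype m] [Fintype n]
    (A B : Matrix m n 𝕜) :
    RCLike.re ((A - B) * (A - B)ᴴ).trace
      = RCLike.re (A * Aᴴ).trace + RCLike.re (B * Bᴴ).trace - 2 * RCLike.re (A * Bᴴ).trace := by
  have hswap : RCLike.re (B * Aᴴ).trace = RCLike.re (A * Bᴴ).trace := by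
    rw [← conjTranspose_conjTranspose A, ← conjTranspose_mul, trace_conjTranspose,
      conjTranspose_conjTranspose, RCLike.star_def, RCLike.conj_re]
  simp only [conjTranspose_sub, Matrix.sub_mul, Matrix.mul_sub, trace_sub, map_sub, hswap]
  ring

lemma Matrix.sq_norm_mem_doublyStochastic {U : Matrix ι ι 𝕜} (hU : U ∈ unitaryGroup ι 𝕜) :
    (of fun i j => ‖U i j‖ ^ 2) ∈ doublyStochastic ℝ ι := by
  refine mem_doublyStochastic_iff_sum.2 ⟨fun i j => sq_nonneg _, fun i => ?_, fun j => ?_⟩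
  · have h := congr_fun₂ (mem_unitaryGroup_iff.1 hU) i i
    rw [star_eq_conjTranspose, mul_conjTranspose_self_apply_self, one_apply_eq] at h
    exact_mod_cast h
  · have h := congr_fun₂ (mem_unitaryGroup_iff'.1 hU) j j
    rw [star_eq_conjTranspose, conjTranspose_mul_self_apply_self, one_apply_eq] at h
    exact_mod_cast h

lemma exists_mem_unitaryGroup_eq_diagonal_mul (M : Matrix ι ι 𝕜) (σ : ι → ℝ)
    (h : M * Mᴴ = diagonal fun i => (σ i : 𝕜) ^ 2) :
    ∃ V ∈ unitaryGroup ι 𝕜, M = diagonal (fun i => (σ i : 𝕜)) * V := by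
  let r : ι → EuclideanSpace 𝕜 ι := fun i => WithLp.toLp 2 (M i)
  have hr : ∀ i j, inner 𝕜 (r i) (r j) = if i = j then (σ i : 𝕜) ^ 2 else 0 := by
    intro i j
    have hji := congr_fun₂ h j i
    simp only [mul_apply, conjTranspose_apply, diagonal_apply, RCLike.star_def] at hji
    simp only [r, PiLp.inner_apply, RCLike.inner_apply, hji, eq_comm (a := j)]
    split_ifs with hij <;> simp [hij]
  -- The rows of `M` are orthogonal of norms `|σ i|`: normalize those with `σ i ≠ 0` and extend.
  let v : ι → EuclideanSpace 𝕜 ι := fun i => ((σ i)⁻¹ : 𝕜) • r i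
  have hv : Orthonormal 𝕜 (({i | σ i ≠ 0} : Set ι).domRestrict v) := by
    rw [orthonormal_iff_ite]
    rintro ⟨i, hi⟩ ⟨j, hj⟩
    simp only [Set.domRestrict_apply, v, inner_smul_left, inner_smul_right, hr, Subtype.mk.injEq]
    split_ifs with hij
    · subst hij
      have : (σ i : 𝕜) ≠ 0 := RCLike.ofReal_ne_zero.2 hi
      simp only [map_inv₀, RCLike.conj_ofReal]
      field_simp
    · simp
  obtain ⟨b, hb⟩ := hv.exists_orthonormalBasis_extension_of_card_eq (by simp)
  refine ⟨((EuclideanSpace.basisFun ι 𝕜).toBasis.toMatrix b)ᵀ,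
    transpose_mem_unitaryGroup_iff.2 (OrthonormalBasis.toMatrix_orthonormalBasis_mem_unitary _ _),
    ?_⟩
  ext i j
  rw [diagonal_mul, transpose_apply, Module.Basis.toMatrix_apply,
    OrthonormalBasis.coe_toBasis_repr_apply, EuclideanSpace.basisFun_repr]
  by_cases hi : σ i = 0
  · have : r i = 0 := inner_self_eq_zero.1 (by rw [hr, if_pos rfl, hi]; simp)
    simp [hi, show M i j = r i j from rfl, this]
  · rw [hb i hi]
    have : (σ i : 𝕜) ≠ 0 := RCLike.ofReal_ne_zero.2 hi
    simp [v, r, this]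

lemma Matrix.re_trace_diagonal_mul_mul_diagonal_mul_le {a b : ι → ℝ} (hab : Monovary a b)
    (ha : ∀ i, 0 ≤ a i) (hb : ∀ i, 0 ≤ b i) {Y Z : Matrix ι ι 𝕜} (hY : Y ∈ unitaryGroup ι 𝕜)
    (hZ : Z ∈ unitaryGroup ι 𝕜) :
    RCLike.re (diagonal (fun i => (a i : 𝕜)) * Y * diagonal (fun i => (b i : 𝕜)) * Z).trace
      ≤ ∑ i, a i * b i := by
  set D : Matrix ι ι ℝ :=
    (1 / 2 : ℝ) • (of fun k l => ‖Y k l‖ ^ 2) + (1 / 2 : ℝ) • (of fun k l => ‖Zᵀ k l‖ ^ 2)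
  have hD : D ∈ doublyStochastic ℝ ι :=
    convex_doublyStochastic (sq_norm_mem_doublyStochastic hY)
      (sq_norm_mem_doublyStochastic (transpose_mem_unitaryGroup_iff.2 hZ))
      (by norm_num) (by norm_num) (by norm_num)
  refine le_trans ?_ (hab.sum_sum_mul_mul_le_of_mem_doublyStochastic hD)
  have htrace : (diagonal (fun i => (a i : 𝕜)) * Y * diagonal (fun i => (b i : 𝕜)) * Z).trace
      = ∑ k, ∑ l, ((a k * b l : ℝ) : 𝕜) * (Y k l * Z l k) := by
    simp only [trace, diag_apply, mul_apply (M := _ * _ * _), mul_diagonal, diagonal_mul]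
    refine sum_congr rfl fun k _ => sum_congr rfl fun l _ => ?_
    push_cast
    ring
  rw [htrace, map_sum]
  refine sum_le_sum fun k _ => ?_
  rw [map_sum]
  refine sum_le_sum fun l _ => ?_
  rw [RCLike.re_ofReal_mul]
  refine mul_le_mul_of_nonneg_left ?_ (mul_nonneg (ha k) (hb l))
  calc RCLike.re (Y k l * Z l k) ≤ ‖Y k l‖ * ‖Z l k‖ := (RCLike.re_le_norm _).trans (norm_mul _ _).le
    _ ≤ D k l := by
      simp only [D, Matrix.add_apply, Matrix.smul_apply, of_apply, transpose_apply, smul_eq_mul]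
      nlinarith [sq_nonneg (‖Y k l‖ - ‖Z l k‖)]

end

section SingularValues

variable {k n : ℕ}

lemma svals_nonneg (C : Matrix (Fin k) (Fin n) ℂ) (i : Fin k) : 0 ≤ svals C i :=
  Real.sqrt_nonneg _

lemma svals_antitone (C : Matrix (Fin k) (Fin n) ℂ) : Antitone (svals C) :=
  fun _ _ hij => Real.sqrt_le_sqrt
    (Tuple.monotone_sort (isHermitian_mul_conjTranspose_self C).eigenvalues (Fin.rev_le_rev.2 hij))

lemma sq_svals (C : Matrix (Fin k) (Fin n) ℂ) (i : Fin k) :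
    svals C i ^ 2 = (isHermitian_mul_conjTranspose_self C).eigenvalues
      (Fin.revPerm.trans (Tuple.sort (isHermitian_mul_conjTranspose_self C).eigenvalues) i) :=
  Real.sq_sqrt (eigenvalues_self_mul_conjTranspose_nonneg C _)

lemma sum_sq_svals (C : Matrix (Fin k) (Fin n) ℂ) :
    ∑ i, svals C i ^ 2 = RCLike.re (C * Cᴴ).trace := by
  rw [(isHermitian_mul_conjTranspose_self C).trace_eq_sum_eigenvalues, map_sum]
  simp only [RCLike.ofReal_re, sq_svals]
  exact Equiv.sum_comp _ _

lemma exists_mem_unitaryGroup_conj_mul_conjTranspose_eq_diagonal_sq_svals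
    (C : Matrix (Fin k) (Fin n) ℂ) :
    ∃ U ∈ unitaryGroup (Fin k) ℂ, Uᴴ * (C * Cᴴ) * U = diagonal fun i => (svals C i : ℂ) ^ 2 := by
  set hH := isHermitian_mul_conjTranspose_self C
  set W : Matrix (Fin k) (Fin k) ℂ := ↑hH.eigenvectorUnitary
  set p : Equiv.Perm (Fin k) := Fin.revPerm.trans (Tuple.sort hH.eigenvalues)
  have hW : Wᴴ * (C * Cᴴ) * W = diagonal (RCLike.ofReal ∘ hH.eigenvalues) := by
    rw [← hH.conjStarAlgAut_star_eigenvectorUnitary, Unitary.conjStarAlgAut_star_apply]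
    rfl
  refine ⟨W.submatrix id p, ?_, ?_⟩
  · rw [mem_unitaryGroup_iff, star_eq_conjTranspose, conjTranspose_submatrix, submatrix_mul_equiv,
      ← star_eq_conjTranspose, submatrix_id_id]
    exact Unitary.coe_mul_star_self _
  · rw [conjTranspose_submatrix, ← submatrix_id_id (C * Cᴴ),
      ← submatrix_mul _ _ _ _ _ Function.bijective_id,
      ← submatrix_mul _ _ _ _ _ Function.bijective_id, hW, submatrix_diagonal_equiv]
    ext i j
    simp [diagonal_apply, ← Complex.ofReal_pow, sq_svals, p]

lemma exists_eq_mul_diagonal_svals_mul (C : Matrix (Fin n) (Fin n) ℂ) :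
    ∃ U ∈ unitaryGroup (Fin n) ℂ, ∃ V ∈ unitaryGroup (Fin n) ℂ,
      C = U * diagonal (fun i => (svals C i : ℂ)) * V := by
  obtain ⟨U, hU, hUC⟩ := exists_mem_unitaryGroup_conj_mul_conjTranspose_eq_diagonal_sq_svals C
  obtain ⟨V, hV, hCV⟩ := exists_mem_unitaryGroup_eq_diagonal_mul (Uᴴ * C) (svals C) (by
    rw [conjTranspose_mul, conjTranspose_conjTranspose]
    convert hUC using 1
    · simp only [Matrix.mul_assoc]
    · rfl)
  refine ⟨U, hU, V, hV, ?_⟩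
  calc C = U * (Uᴴ * C) := by
        rw [← Matrix.mul_assoc, ← star_eq_conjTranspose, mem_unitaryGroup_iff.1 hU, Matrix.one_mul]
    _ = _ := by
        rw [hCV]
        exact (Matrix.mul_assoc _ _ _).symm

theorem re_trace_mul_conjTranspose_le_sum_svals_mul (C C' : Matrix (Fin n) (Fin n) ℂ) :
    RCLike.re (C * C'ᴴ).trace ≤ ∑ i, svals C i * svals C' i := by
  obtain ⟨U, hU, V, hV, hC⟩ := exists_eq_mul_diagonal_svals_mul C
  obtain ⟨U', hU', V', hV', hC'⟩ := exists_eq_mul_diagonal_svals_mul C'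
  have hcyc : (C * C'ᴴ).trace = (diagonal (fun i => (svals C i : ℂ)) * (V * V'ᴴ)
      * diagonal (fun i => (svals C' i : ℂ)) * (U'ᴴ * U)).trace := by
    have hreal : star (fun i => (svals C' i : ℂ)) = fun i => (svals C' i : ℂ) :=
      funext fun i => Complex.conj_ofReal _
    conv_lhs => rw [hC, hC']
    rw [conjTranspose_mul, conjTranspose_mul, diagonal_conjTranspose, hreal]
    simp only [Matrix.mul_assoc]
    rw [trace_mul_comm U]
    simp only [Matrix.mul_assoc]
  rw [hcyc]
  exact re_trace_diagonal_mul_mul_diagonal_mul_le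
    ((svals_antitone C).monovary (svals_antitone C')) (svals_nonneg C) (svals_nonneg C')
    (mul_mem hV (Unitary.star_mem hV')) (mul_mem (Unitary.star_mem hU') hU)

end SingularValues

/-- Hoffman–Wielandt inequality for singular values:
∑ᵢ |sᵢ(C) − sᵢ(C')|² ≤ ‖C − C'‖_HS². -/
theorem stmt3 {n : ℕ} (C C' : Matrix (Fin n) (Fin n) ℂ) :
    ∑ i, |svals C i - svals C' i| ^ 2 ≤ ∑ i, ∑ j, ‖(C - C') i j‖ ^ 2 := by
  have hexpand : ∑ i, |svals C i - svals C' i| ^ 2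
      = ∑ i, svals C i ^ 2 + ∑ i, svals C' i ^ 2 - 2 * ∑ i, svals C i * svals C' i := by
    simp only [sq_abs, sub_sq, sum_sub_distrib, sum_add_distrib, mul_sum, mul_assoc]
    ring
  rw [hexpand, sum_sq_svals, sum_sq_svals, ← re_trace_mul_conjTranspose_self,
    re_trace_sub_mul_conjTranspose_sub]
  linarith [re_trace_mul_conjTranspose_le_sum_svals_mul C C']
end

section
/- For every x ∈ ℂⁿ with unit Euclidean norm that is (δ,ε)-incompressible (i.e., dist(x, Sparse(δ)) > ε), there exists a set I ⊆ {1,…,n} of cardinality at least (1/2)ε²δn such that |xᵢ| ≥ ε/√(2n) for all i ∈ I. -/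
/-!
Let `A` be the set of coordinates with `‖x i‖ ≥ ε / √(2n)`. Zeroing the coordinates outside `A`
moves `x` by at most `√n · ε / √(2n) = ε / √2 < ε`, so by incompressibility the truncated vector
is not `δ`-sparse, i.e. `#A > δn`. Since `0` is sparse, `ε < dist(x, 0) = 1`, hence
`δn ≥ ε²δn / 2`.
-/

open Metric Finset

namespace EuclideanSpace

variable {𝕜 ι : Type*} [RCLike 𝕜]

variable (𝕜 ι) in
def sparseVectors (k : ℝ) : Set (EuclideanSpace 𝕜 ι) :=
  {y | (Set.ncard {i | y i ≠ 0} : ℝ) ≤ k}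

theorem zero_mem_sparseVectors {k : ℝ} (hk : 0 ≤ k) : 0 ∈ sparseVectors 𝕜 ι k := by
  simpa [sparseVectors] using hk

theorem sparseVectors_nonempty_iff {k : ℝ} : (sparseVectors 𝕜 ι k).Nonempty ↔ 0 ≤ k :=
  ⟨fun ⟨_, hy⟩ => (Nat.cast_nonneg _).trans hy, fun hk => ⟨0, zero_mem_sparseVectors hk⟩⟩

noncomputable def truncate (s : Finset ι) (x : EuclideanSpace 𝕜 ι) : EuclideanSpace 𝕜 ι :=
  WithLp.toLp 2 ((s : Set ι).indicator x)

theorem truncate_mem_sparseVectors {k : ℝ} {s : Finset ι} (hs : (s.card : ℝ) ≤ k)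
    (x : EuclideanSpace 𝕜 ι) : truncate s x ∈ sparseVectors 𝕜 ι k := by
  have hsupp : {i | truncate s x i ≠ 0} ⊆ s := fun i hi => by
    by_contra his
    exact hi (Set.indicator_of_notMem his _)
  calc (Set.ncard {i | truncate s x i ≠ 0} : ℝ) ≤ s.card := by
        exact_mod_cast (Set.ncard_le_ncard hsupp s.finite_toSet).trans_eq (Set.ncard_coe_finset s)
    _ ≤ k := hs

variable [Fintype ι]

theorem infDist_sparseVectors_le_norm {k : ℝ} (hk : 0 ≤ k) (x : EuclideanSpace 𝕜 ι) :
    infDist x (sparseVectors 𝕜 ι k) ≤ ‖x‖ := by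
  simpa using infDist_le_dist_of_mem (x := x) (zero_mem_sparseVectors hk)

theorem dist_truncate_le {s : Finset ι} {x : EuclideanSpace 𝕜 ι} {t : ℝ} (ht : 0 ≤ t)
    (hsmall : ∀ i ∉ s, ‖x i‖ ≤ t) : dist x (truncate s x) ≤ √(Fintype.card ι) * t := by
  have hcoord : ∀ i, dist (x i) (truncate s x i) ^ 2 ≤ t ^ 2 := fun i => by
    by_cases his : i ∈ s
    · simpa [truncate, his] using sq_nonneg t
    · simpa [truncate, his] using pow_le_pow_left₀ (norm_nonneg _) (hsmall i his) 2
  calc dist x (truncate s x) = √(∑ i, dist (x i) (truncate s x i) ^ 2) := dist_eq _ _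
    _ ≤ √(∑ _i : ι, t ^ 2) := Real.sqrt_le_sqrt (sum_le_sum fun i _ => hcoord i)
    _ = √(Fintype.card ι) * t := by
      rw [sum_const, card_univ, nsmul_eq_mul, Real.sqrt_mul (Nat.cast_nonneg _),
        Real.sqrt_sq ht]

theorem lt_card_filter_le_norm_of_lt_infDist {x : EuclideanSpace 𝕜 ι} {k t : ℝ} (ht : 0 ≤ t)
    (h : √(Fintype.card ι) * t < infDist x (sparseVectors 𝕜 ι k)) :
    k < #{i | t ≤ ‖x i‖} := by
  by_contra! hcard
  have hsmall : ∀ i ∉ ({i | t ≤ ‖x i‖} : Finset ι), ‖x i‖ ≤ t := fun i hi => by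
    simp only [mem_filter, mem_univ, true_and, not_le] at hi
    exact hi.le
  have := infDist_le_dist_of_mem (x := x) (truncate_mem_sparseVectors hcard x)
  linarith [dist_truncate_le ht hsmall]

end EuclideanSpace

open EuclideanSpace

theorem stmt11_general {n : ℕ} (δ ε : ℝ) (hε : 0 < ε)
    (x : EuclideanSpace ℂ (Fin n)) (hx : ‖x‖ = 1)
    (hinc : ε < Metric.infDist x
      {y : EuclideanSpace ℂ (Fin n) | (Set.ncard {i | y i ≠ 0} : ℝ) ≤ δ * n}) :
    ∃ I : Finset (Fin n), (1 / 2) * ε ^ 2 * δ * n ≤ (I.card : ℝ) ∧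
      ∀ i ∈ I, ε / Real.sqrt (2 * n) ≤ ‖x i‖ := by
  change ε < infDist x (sparseVectors ℂ (Fin n) (δ * n)) at hinc
  have hn : (n : ℝ) ≠ 0 := by
    rintro hn
    obtain rfl := Nat.cast_eq_zero.1 hn
    simp [EuclideanSpace.norm_eq] at hx
  have hk : 0 ≤ δ * n := sparseVectors_nonempty_iff.1 <| Set.nonempty_iff_ne_empty.2 fun h => by
    rw [h, infDist_empty] at hinc
    exact hε.not_gt hinc
  have hε1 : ε < 1 := hx ▸ hinc.trans_le (infDist_sparseVectors_le_norm hk x)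
  have hspread : √n * (ε / √(2 * n)) < ε := by
    have hsqrt : √n * (ε / √(2 * n)) = ε / √2 := by
      rw [Real.sqrt_mul zero_le_two]
      field_simp
    exact hsqrt ▸ div_lt_self hε Real.one_lt_sqrt_two
  refine ⟨({i | ε / √(2 * n) ≤ ‖x i‖} : Finset (Fin n)), ?_, fun i hi => (mem_filter.1 hi).2⟩
  have hcard : δ * n < #{i | ε / √(2 * n) ≤ ‖x i‖} :=
    lt_card_filter_le_norm_of_lt_infDist (by positivity) <| by
      rw [Fintype.card_fin]
      exact hspread.trans hinc
  have hε2 : ε ^ 2 ≤ 1 := by nlinarith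
  nlinarith [mul_le_mul_of_nonneg_right hε2 hk]

/-- Incompressible vectors are spread (complex version of Rudelson–Vershynin Lemma 3.4):
if x is a unit vector in ℂⁿ with dist(x, Sparse(δ)) > ε, then there is a set I of at
least (1/2)ε²δn coordinates on which |xᵢ| ≥ ε/√(2n). -/
theorem stmt11 {n : ℕ} (hn : 0 < n) (δ ε : ℝ) (hδ : 0 < δ) (hε : 0 < ε)
    (x : EuclideanSpace ℂ (Fin n)) (hx : ‖x‖ = 1)
    (hinc : ε < Metric.infDist x
      {y : EuclideanSpace ℂ (Fin n) | (Set.ncard {i | y i ≠ 0} : ℝ) ≤ δ * n}) :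
    ∃ I : Finset (Fin n), (1 / 2) * ε ^ 2 * δ * n ≤ (I.card : ℝ) ∧
      ∀ i ∈ I, ε / Real.sqrt (2 * n) ≤ ‖x i‖ :=
  stmt11_general δ ε hε x hx hinc
end

section
/- Let X = (X₁,…,Xₙ) be a random vector in ℝⁿ such that every coordinate-subvector (Xᵢ)_{i∈I} with |I| = m has density bounded by Cᵐ. Then for every ρ > 0 and α ∈ (0,1), P(|{j : |Xⱼ| ≥ ρ}| ≤ (1−α/2)n) ≤ binom(n, ⌊αn/2⌋) (2Cρ)^{⌊αn/2⌋}. In particular, choosing ρ = exp(−C' log(2/α)) makes this probability at most 2 exp(−αn) for suitable C'. -/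
open MeasureTheory
open scoped ENNReal

/-! If at most `(1 - α/2) n` coordinates satisfy `ρ ≤ |Xⱼ|`, then some set `I` of
`m = ⌊αn/2⌋` coordinates has `|Xᵢ| ≤ ρ` for all `i ∈ I`. For a fixed `I` this event is the
preimage of the cube `[-ρ, ρ]^I`, whose probability is at most the density bound `Cᵐ` times the
volume `(2ρ)ᵐ`; a union bound over the `n.choose m` choices of `I` concludes. -/

theorem Finset.exists_card_eq_forall_not_of_ncard_add_le {ι : Type*} [Fintype ι]
    {p : ι → Prop} {m : ℕ} (h : {j | p j}.ncard + m ≤ Fintype.card ι) :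
    ∃ I : Finset ι, I.card = m ∧ ∀ i ∈ I, ¬ p i := by
  have : m ≤ {j | p j}ᶜ.ncard := by rw [Set.ncard_compl, Nat.card_eq_fintype_card]; omega
  obtain ⟨t, hts, htm⟩ := Set.exists_subset_card_eq this
  exact ⟨t.toFinite.toFinset, by rwa [← Set.ncard_eq_toFinset_card],
    fun i hi => hts (by simpa using hi)⟩

theorem Real.volume_pi_Icc_neg_self {ι : Type*} [Fintype ι] (ρ : ℝ) :
    volume (Set.univ.pi fun _ : ι => Set.Icc (-ρ) ρ) =
      ENNReal.ofReal (2 * ρ) ^ Fintype.card ι := by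
  rw [volume_pi_pi, Finset.prod_const, Real.volume_Icc, sub_neg_eq_add, two_mul, Finset.card_univ]

section

variable {Ω : Type*} {mΩ : MeasurableSpace Ω} {μ : Measure Ω}

theorem measure_preimage_le_mul_of_map_eq_withDensity {E : Type*} [MeasurableSpace E]
    {ν : Measure E} {Y : Ω → E} (hY : AEMeasurable Y μ) {f : E → ℝ≥0∞}
    (hmap : μ.map Y = ν.withDensity f) {c : ℝ≥0∞} (hf : ∀ x, f x ≤ c)
    {s : Set E} (hs : MeasurableSet s) : μ (Y ⁻¹' s) ≤ c * ν s :=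
  calc μ (Y ⁻¹' s) = ∫⁻ x in s, f x ∂ν := by
        rw [← Measure.map_apply_of_aemeasurable hY hs, hmap, withDensity_apply _ hs]
    _ ≤ ∫⁻ _ in s, c ∂ν := lintegral_mono hf
    _ = c * ν s := setLIntegral_const s c

theorem measure_forall_abs_le_le_of_density_le {ι : Type*} [Fintype ι] {Y : Ω → ι → ℝ}
    (hY : AEMeasurable Y μ) {f : (ι → ℝ) → ℝ≥0∞} (hmap : μ.map Y = volume.withDensity f)
    {c : ℝ} (hf : ∀ x, f x ≤ ENNReal.ofReal (c ^ Fintype.card ι)) {ρ : ℝ} (hρ : 0 ≤ ρ) :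
    μ {ω | ∀ i, |Y ω i| ≤ ρ} ≤ ENNReal.ofReal ((2 * c * ρ) ^ Fintype.card ι) := by
  have hcube : {ω | ∀ i, |Y ω i| ≤ ρ} = Y ⁻¹' Set.univ.pi fun _ => Set.Icc (-ρ) ρ := by
    ext ω
    simp only [Set.mem_ofPred_eq, Set.mem_preimage, Set.mem_univ_pi, Set.mem_Icc, abs_le]
  calc μ {ω | ∀ i, |Y ω i| ≤ ρ}
      ≤ ENNReal.ofReal (c ^ Fintype.card ι) * ENNReal.ofReal (2 * ρ) ^ Fintype.card ι := by
        rw [hcube, ← Real.volume_pi_Icc_neg_self]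
        exact measure_preimage_le_mul_of_map_eq_withDensity hY hmap hf
          (MeasurableSet.univ_pi fun _ => measurableSet_Icc)
    _ = ENNReal.ofReal ((2 * c * ρ) ^ Fintype.card ι) := by
        rw [← ENNReal.ofReal_pow (by positivity), ← ENNReal.ofReal_mul' (by positivity),
          ← mul_pow, mul_right_comm, mul_comm c]

theorem measure_biUnion_powersetCard_le {ι : Type*} [Fintype ι] {m : ℕ}
    {A : Finset ι → Set Ω} {c : ℝ≥0∞} (hA : ∀ I : Finset ι, I.card = m → μ (A I) ≤ c) :
    μ (⋃ I ∈ Finset.univ.powersetCard m, A I) ≤ (Fintype.card ι).choose m * c :=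
  calc μ (⋃ I ∈ Finset.univ.powersetCard m, A I)
      ≤ ∑ I ∈ Finset.univ.powersetCard m, μ (A I) := measure_biUnion_finset_le _ _
    _ ≤ ∑ _I ∈ Finset.univ.powersetCard m, c :=
        Finset.sum_le_sum fun I hI => hA I (Finset.mem_powersetCard_univ.mp hI)
    _ = (Fintype.card ι).choose m * c := by
        rw [Finset.sum_const, Finset.card_powersetCard, Finset.card_univ, nsmul_eq_mul]

end

theorem stmt12_general {n : ℕ} {Ω : Type*} {mΩ : MeasurableSpace Ω} (μ : Measure Ω)
    [IsProbabilityMeasure μ] (X : Ω → Fin n → ℝ) (hX : Measurable X)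
    (C : ℝ)
    (hdens : ∀ I : Finset (Fin n), I.Nonempty →
      ∃ f : (↥I → ℝ) → ℝ≥0∞,
        Measure.map (fun ω (i : I) => X ω i) μ = volume.withDensity f ∧
        ∀ x, f x ≤ ENNReal.ofReal (C ^ I.card)) :
    ∀ (ρ α : ℝ), 0 < ρ → 0 < α → α < 1 →
      μ {ω | (Set.ncard {j | ρ ≤ |X ω j|} : ℝ) ≤ (1 - α / 2) * n}
        ≤ (n.choose ⌊α * n / 2⌋₊) * ENNReal.ofReal ((2 * C * ρ) ^ ⌊α * n / 2⌋₊) := by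
  intro ρ α hρ hα _
  set m := ⌊α * n / 2⌋₊
  have hsmall (I : Finset (Fin n)) (hI : I.card = m) :
      μ {ω | ∀ i ∈ I, |X ω i| ≤ ρ} ≤ ENNReal.ofReal ((2 * C * ρ) ^ m) := by
    rcases I.eq_empty_or_nonempty with rfl | hne
    · simp [← hI]
    obtain ⟨f, hmap, hf⟩ := hdens I hne
    have hY : Measurable fun ω (i : I) => X ω i := by fun_prop
    simpa only [Subtype.forall, Fintype.card_coe, hI] using
      measure_forall_abs_le_le_of_density_le hY.aemeasurable hmap (by simpa using hf) hρ.le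
  have hcover : {ω | (Set.ncard {j | ρ ≤ |X ω j|} : ℝ) ≤ (1 - α / 2) * n} ⊆
      ⋃ I ∈ Finset.univ.powersetCard m, {ω | ∀ i ∈ I, |X ω i| ≤ ρ} := by
    intro ω hω
    have hm : (m : ℝ) ≤ α * n / 2 := Nat.floor_le (by positivity)
    have hcount : {j | ρ ≤ |X ω j|}.ncard + m ≤ Fintype.card (Fin n) := by
      have : ({j | ρ ≤ |X ω j|}.ncard : ℝ) + m ≤ n := by linarith [hω.out]
      rw [Fintype.card_fin]; exact_mod_cast this
    obtain ⟨I, hI, hIsmall⟩ := Finset.exists_card_eq_forall_not_of_ncard_add_le hcount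
    exact Set.mem_biUnion (Finset.mem_powersetCard_univ.mpr hI)
      fun i hi => (not_le.mp (hIsmall i hi)).le
  calc _ ≤ _ := measure_mono hcover
    _ ≤ _ := by simpa using measure_biUnion_powersetCard_le hsmall

/-- If every coordinate-subvector of X of size m has density bounded by Cᵐ, then for
ρ > 0 and α ∈ (0,1),
P(|{j : |Xⱼ| ≥ ρ}| ≤ (1−α/2)n) ≤ binom(n, ⌊αn/2⌋)(2Cρ)^{⌊αn/2⌋}. -/
theorem stmt12 {n : ℕ} {Ω : Type*} {mΩ : MeasurableSpace Ω} (μ : Measure Ω)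
    [IsProbabilityMeasure μ] (X : Ω → Fin n → ℝ) (hX : Measurable X)
    (C : ℝ) (hC : 0 < C)
    (hdens : ∀ I : Finset (Fin n), I.Nonempty →
      ∃ f : (↥I → ℝ) → ℝ≥0∞,
        Measure.map (fun ω (i : I) => X ω i) μ = volume.withDensity f ∧
        ∀ x, f x ≤ ENNReal.ofReal (C ^ I.card)) :
    ∀ (ρ α : ℝ), 0 < ρ → 0 < α → α < 1 →
      μ {ω | (Set.ncard {j | ρ ≤ |X ω j|} : ℝ) ≤ (1 - α / 2) * n}
        ≤ (n.choose ⌊α * n / 2⌋₊) * ENNReal.ofReal ((2 * C * ρ) ^ ⌊α * n / 2⌋₊) :=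
  stmt12_general (mΩ := mΩ) μ X hX C hdens
end
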